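/- Let n ∈ ℕ, p ∈ (0,1), D ∈ ℕ, and let H be a finite graph with |V(H)| ≤ n. Let Q = G(n,p) and let P be the planted-H distribution on {0,1}^{E(K_n)}. Then the square of the degree-D advantage satisfies (Adv^{≤D})² = Σ_{S ⊆ E(K_n), |S| ≤ D} ( M_{S,H} / n_(|V(S)|) )² · ((1−p)/p)^{|S|}, where the sum ranges over all edge subsets S of E(K_n) of size at most D (including S = ∅, which contributes 1), V(S) denotes the set of vertices incident to an edge of S, S is regarded as the graph with vertex set V(S) and edge set S, and n_(k) is the falling factorial. -/

import Mathlib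

/-
Under the null distribution the functions `χ_S` are orthonormal, so a degree-`D` test
`f = ∑ c_S χ_S` has `E_Q f² = ∑ c_S²` while `E_P f = ∑ c_S E_P χ_S`; by Cauchy–Schwarz the
advantage is maximised at `c_S = E_P χ_S`, whence `Adv² = ∑_{|S| ≤ D} (E_P χ_S)²`.
Averaging over the independent noise edges first, `E_P χ_S` is the probability that `S` lies in
the planted copy `φ(H)` times `χ(1)^|S| = ((1 - p) / √(p(1 - p)))^|S|`. Finally `φ` plants `S`
exactly when `φ⁻¹` restricted to `V(S)` is a copy of `S` in `H`, and by symmetry every injection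
`V(S) → [n]` extends to the same number `n_(|V(H)|) / n_(|V(S)|)` of injections `V(H) → [n]`;
so the probability is `M_{S,H} / n_(|V(S)|)`.
-/

open Filter

namespace Planted

abbrev Edge (n : ℕ) := {e : Sym2 (Fin n) // ¬ e.IsDiag}

abbrev EdgeFun (n : ℕ) := Edge n → Bool

noncomputable def nullWeight (n : ℕ) (p : ℝ) (X : EdgeFun n) : ℝ :=
  ∏ e : Edge n, if X e then p else 1 - p

noncomputable def expQ (n : ℕ) (p : ℝ) (f : EdgeFun n → ℝ) : ℝ :=
  ∑ X : EdgeFun n, nullWeight n p X * f X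

noncomputable def varQ (n : ℕ) (p : ℝ) (f : EdgeFun n → ℝ) : ℝ :=
  expQ n p fun X => (f X - expQ n p f) ^ 2

open Classical in
noncomputable def plant {V : Type} (n : ℕ) (H : SimpleGraph V) (φ : V ↪ Fin n)
    (X : EdgeFun n) : EdgeFun n :=
  fun e => if ∃ u v, H.Adj u v ∧ (e : Sym2 (Fin n)) = s(φ u, φ v) then true else X e

open Classical in
noncomputable def expP {V : Type} [Fintype V] (n : ℕ) (p : ℝ) (H : SimpleGraph V)
    (f : EdgeFun n → ℝ) : ℝ :=
  (Fintype.card (V ↪ Fin n) : ℝ)⁻¹ *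
    ∑ φ : V ↪ Fin n, ∑ X : EdgeFun n, nullWeight n p X * f (plant n H φ X)

noncomputable def varP {V : Type} [Fintype V] (n : ℕ) (p : ℝ) (H : SimpleGraph V)
    (f : EdgeFun n → ℝ) : ℝ :=
  expP n p H fun X => (f X - expP n p H f) ^ 2

noncomputable def chi (n : ℕ) (p : ℝ) (S : Finset (Edge n)) (X : EdgeFun n) : ℝ :=
  ∏ e ∈ S, ((if X e then (1 : ℝ) else 0) - p) / Real.sqrt (p * (1 - p))

def IsDegreeLE (n : ℕ) (p : ℝ) (D : ℕ) (f : EdgeFun n → ℝ) : Prop :=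
  f ∈ Submodule.span ℝ {g : EdgeFun n → ℝ | ∃ S : Finset (Edge n), S.card ≤ D ∧ g = chi n p S}

noncomputable def advOf {V : Type} [Fintype V] (n : ℕ) (p : ℝ) (H : SimpleGraph V)
    (f : EdgeFun n → ℝ) : ℝ :=
  expP n p H f / Real.sqrt (expQ n p fun X => f X ^ 2)

noncomputable def Adv {V : Type} [Fintype V] (n : ℕ) (p : ℝ) (D : ℕ)
    (H : SimpleGraph V) : ℝ :=
  sSup {r : ℝ | ∃ f, IsDegreeLE n p D f ∧ f ≠ 0 ∧ r = advOf n p H f}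

def IsStar (n t : ℕ) (S : Finset (Edge n)) : Prop :=
  S.card = t ∧ ∃ v : Fin n, ∀ e ∈ S, v ∈ (e : Sym2 (Fin n))

open Classical in
noncomputable def starCount (n : ℕ) (p : ℝ) (t : ℕ) : EdgeFun n → ℝ :=
  fun X => ∑ S : Finset (Edge n), if IsStar n t S then chi n p S X else 0

def StronglySeparates {Vf : ℕ → Type} [∀ n, Fintype (Vf n)] (p : ℕ → ℝ)
    (H : ∀ n, SimpleGraph (Vf n)) (f : ∀ n, EdgeFun n → ℝ) : Prop :=
  (fun n => max (Real.sqrt (varP n (p n) (H n) (f n))) (Real.sqrt (varQ n (p n) (f n))))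
    =o[atTop] fun n => expP n (p n) (H n) (f n) - expQ n (p n) (f n)

noncomputable def copyCount {α β : Type} (S : SimpleGraph α) (G : SimpleGraph β) : ℕ :=
  Nat.card {f : α ↪ β // ∀ u v, S.Adj u v → G.Adj (f u) (f v)}

def starGraph (t : ℕ) : SimpleGraph (Fin (t + 1)) :=
  SimpleGraph.fromRel fun u _ => u = 0

open Classical in
noncomputable def edgeVerts (n : ℕ) (S : Finset (Edge n)) : Finset (Fin n) :=
  Finset.univ.filter fun v => ∃ e ∈ S, v ∈ (e : Sym2 (Fin n))

def finsetGraph (n : ℕ) (S : Finset (Edge n)) :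
    SimpleGraph {v : Fin n // v ∈ edgeVerts n S} where
  Adj u v := ∃ e ∈ S, (e : Sym2 (Fin n)) = s(u.1, v.1)
  symm := by
    constructor
    rintro u v ⟨e, he, heq⟩
    exact ⟨e, he, heq.trans Sym2.eq_swap⟩
  loopless := by
    constructor
    rintro u ⟨e, he, heq⟩
    exact e.2 (by rw [heq]; exact Sym2.mk_isDiag_iff.mpr rfl)

noncomputable def finCopyCount (n : ℕ) (S : Finset (Edge n)) {V : Type}
    (H : SimpleGraph V) : ℕ :=
  copyCount (finsetGraph n S) H

end Planted

lemma isGreatest_sum_mul_div_sqrt {ι : Type*} (s : Finset ι) (a : ι → ℝ)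
    (ha : ∃ i ∈ s, a i ≠ 0) :
    IsGreatest {r | ∃ c : ι → ℝ, (∃ i ∈ s, c i ≠ 0) ∧
        r = (∑ i ∈ s, c i * a i) / √(∑ i ∈ s, c i ^ 2)} √(∑ i ∈ s, a i ^ 2) := by
  refine ⟨⟨a, ha, ?_⟩, ?_⟩
  · simp_rw [← sq]
    exact Real.div_sqrt.symm
  · rintro r ⟨c, -, rfl⟩
    refine div_le_of_le_mul₀ (Real.sqrt_nonneg _) (Real.sqrt_nonneg _) ?_
    rw [mul_comm]
    exact Real.sum_mul_le_sqrt_mul_sqrt s c a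

lemma Function.Embedding.card_fiber_trans_mul_card {α β A : Type*} [Fintype β] [Fintype A]
    (i : A ↪ α) (g : A ↪ β) :
    Nat.card {f : α ↪ β // i.trans f = g} * Nat.card (A ↪ β) = Nat.card (α ↪ β) := by
  classical
  have hfiber : ∀ τ : A ↪ β, Nat.card {f : α ↪ β // i.trans f = τ} =
      Nat.card {f : α ↪ β // i.trans f = g} := fun τ => by
    obtain ⟨σ, hσ⟩ := Equiv.Perm.exists_extending_pair g τ g.injective τ.injective
    refine Nat.card_congr
      { toFun := fun f => ⟨f.1.trans σ.symm.toEmbedding, ?_⟩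
        invFun := fun f => ⟨f.1.trans σ.toEmbedding, ?_⟩
        left_inv := fun f => by ext; simp
        right_inv := fun f => by ext; simp }
    · ext a
      simp only [Function.Embedding.trans_apply, Equiv.toEmbedding_apply]
      rw [Equiv.symm_apply_eq, hσ, ← DFunLike.congr_fun f.2 a]
      rfl
    · ext a
      simp only [Function.Embedding.trans_apply, Equiv.toEmbedding_apply]
      rw [← hσ, ← DFunLike.congr_fun f.2 a]
      rfl
  calc Nat.card {f : α ↪ β // i.trans f = g} * Nat.card (A ↪ β)
      = ∑ τ : A ↪ β, Nat.card {f : α ↪ β // i.trans f = τ} := by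
        rw [Finset.sum_congr rfl fun τ _ => hfiber τ, Finset.sum_const, Finset.card_univ,
          smul_eq_mul, mul_comm, Nat.card_eq_fintype_card (α := A ↪ β)]
    _ = Nat.card (α ↪ β) := by
        rw [← Nat.card_sigma]
        exact Nat.card_congr (Equiv.sigmaFiberEquiv fun f : α ↪ β => i.trans f)

lemma SimpleGraph.mem_edgeSet_map_iff {V W : Type*} (H : SimpleGraph V) (φ : V ↪ W)
    (z : Sym2 W) : z ∈ (H.map φ).edgeSet ↔ ∃ u v, H.Adj u v ∧ z = s(φ u, φ v) := by
  induction z using Sym2.ind with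
  | h a b =>
    rw [SimpleGraph.mem_edgeSet, SimpleGraph.map_adj]
    constructor
    · rintro ⟨u, v, huv, rfl, rfl⟩
      exact ⟨u, v, huv, rfl⟩
    · rintro ⟨u, v, huv, h⟩
      rcases Sym2.eq_iff.mp h with ⟨rfl, rfl⟩ | ⟨rfl, rfl⟩
      exacts [⟨u, v, huv, rfl, rfl⟩, ⟨v, u, huv.symm, rfl, rfl⟩]

namespace Planted

open Finset

variable {n : ℕ} {p : ℝ} {V : Type}

noncomputable def chiFactor (p : ℝ) (b : Bool) : ℝ :=
  ((if b then (1 : ℝ) else 0) - p) / Real.sqrt (p * (1 - p))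

lemma chiFactor_mean (p : ℝ) : p * chiFactor p true + (1 - p) * chiFactor p false = 0 := by
  simp only [chiFactor, if_true, Bool.false_eq_true, if_false]
  ring

lemma sq_chiFactor_true (hp : p ∈ Set.Ioo (0 : ℝ) 1) : chiFactor p true ^ 2 = (1 - p) / p := by
  have hq : 0 < 1 - p := sub_pos.mpr hp.2
  rw [chiFactor, if_pos rfl, div_pow, Real.sq_sqrt (mul_pos hp.1 hq).le]
  field_simp

lemma chiFactor_second_moment (hp : p ∈ Set.Ioo (0 : ℝ) 1) :
    p * chiFactor p true ^ 2 + (1 - p) * chiFactor p false ^ 2 = 1 := by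
  have hq : 0 < 1 - p := sub_pos.mpr hp.2
  have hp0 : p ≠ 0 := hp.1.ne'
  simp only [chiFactor, Bool.false_eq_true, if_true, if_false, div_pow,
    Real.sq_sqrt (mul_pos hp.1 hq).le]
  field_simp
  ring

lemma expQ_prod (A : Finset (Edge n)) (g : Edge n → Bool → ℝ) :
    expQ n p (fun X => ∏ e ∈ A, g e (X e)) = ∏ e ∈ A, (p * g e true + (1 - p) * g e false) := by
  classical
  calc expQ n p (fun X => ∏ e ∈ A, g e (X e))
      = ∑ X : EdgeFun n, ∏ e, (if X e then p else 1 - p) * (if e ∈ A then g e (X e) else 1) := by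
        refine sum_congr rfl fun X _ => ?_
        rw [prod_mul_distrib, Fintype.prod_ite_mem]
        rfl
    _ = ∏ e, ∑ b : Bool, (if b then p else 1 - p) * (if e ∈ A then g e b else 1) := by
        rw [prod_univ_sum, Fintype.piFinset_univ]
    _ = ∏ e ∈ A, (p * g e true + (1 - p) * g e false) := by
        rw [← Fintype.prod_ite_mem A]
        refine prod_congr rfl fun e _ => ?_
        by_cases he : e ∈ A <;> simp [he]

lemma expQ_sum_mul {ι : Type*} (s : Finset ι) (c : ι → ℝ) (g : ι → EdgeFun n → ℝ) :
    expQ n p (fun X => ∑ i ∈ s, c i * g i X) = ∑ i ∈ s, c i * expQ n p (g i) := by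
  simp only [expQ, mul_sum]
  rw [sum_comm]
  exact sum_congr rfl fun _ _ => sum_congr rfl fun _ _ => by ring

lemma expQ_chi_mul_chi (hp : p ∈ Set.Ioo (0 : ℝ) 1) (S T : Finset (Edge n)) :
    expQ n p (fun X => chi n p S X * chi n p T X) = if S = T then 1 else 0 := by
  classical
  have hprod : ∀ X : EdgeFun n, chi n p S X * chi n p T X =
      ∏ e ∈ S ∪ T, (if e ∈ S then chiFactor p (X e) else 1) *
        (if e ∈ T then chiFactor p (X e) else 1) := fun X => by
    rw [prod_mul_distrib, prod_ite_mem, prod_ite_mem, union_inter_cancel_left,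
      union_inter_cancel_right]
    rfl
  have hmean : ∀ e ∈ S ∪ T,
      p * ((if e ∈ S then chiFactor p true else 1) * (if e ∈ T then chiFactor p true else 1)) +
        (1 - p) * ((if e ∈ S then chiFactor p false else 1) *
          (if e ∈ T then chiFactor p false else 1)) = if (e ∈ S ↔ e ∈ T) then 1 else 0 := by
    intro e he
    by_cases hS : e ∈ S <;> by_cases hT : e ∈ T
    · simpa [hS, hT, sq] using chiFactor_second_moment hp
    · simpa [hS, hT] using chiFactor_mean p
    · simpa [hS, hT] using chiFactor_mean p
    · simp_all
  have hST : (∀ e ∈ S ∪ T, (e ∈ S ↔ e ∈ T)) ↔ S = T := by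
    refine ⟨fun h => ext fun e => ?_, fun h => by simp [h]⟩
    by_cases he : e ∈ S ∪ T
    · exact h e he
    · simp_all
  simp only [hprod]
  rw [expQ_prod (S ∪ T) fun e b =>
      (if e ∈ S then chiFactor p b else 1) * (if e ∈ T then chiFactor p b else 1),
    prod_congr rfl hmean, prod_boole]
  simp only [hST]

lemma expQ_sq_sum_chi (hp : p ∈ Set.Ioo (0 : ℝ) 1) (s : Finset (Finset (Edge n)))
    (c : Finset (Edge n) → ℝ) :
    expQ n p (fun X => (∑ S ∈ s, c S * chi n p S X) ^ 2) = ∑ S ∈ s, c S ^ 2 := by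
  classical
  have hexpand : ∀ X : EdgeFun n, (∑ S ∈ s, c S * chi n p S X) ^ 2 =
      ∑ S ∈ s, c S * ∑ T ∈ s, c T * (chi n p S X * chi n p T X) := fun X => by
    rw [sq, sum_mul_sum]
    exact sum_congr rfl fun S _ => by rw [mul_sum]; exact sum_congr rfl fun T _ => by ring
  simp only [hexpand]
  rw [expQ_sum_mul]
  refine sum_congr rfl fun S hS => ?_
  simp only [expQ_sum_mul, expQ_chi_mul_chi hp, mul_ite, mul_one, mul_zero, sum_ite_eq, if_pos hS,
    sq]

lemma sum_chi_ne_zero_iff (hp : p ∈ Set.Ioo (0 : ℝ) 1) (s : Finset (Finset (Edge n)))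
    (c : Finset (Edge n) → ℝ) :
    (fun X => ∑ S ∈ s, c S * chi n p S X) ≠ 0 ↔ ∃ S ∈ s, c S ≠ 0 := by
  constructor
  · contrapose!
    intro hc
    funext X
    exact sum_eq_zero fun S hS => by rw [hc S hS, zero_mul]
  · rintro ⟨S, hS, hcS⟩ hf
    have hnorm := expQ_sq_sum_chi hp s c
    simp only [congrFun hf, Pi.zero_apply, expQ, ne_eq, OfNat.ofNat_ne_zero, not_false_eq_true,
      zero_pow, mul_zero, sum_const_zero] at hnorm
    exact hcS (pow_eq_zero_iff two_ne_zero |>.mp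
      ((sum_eq_zero_iff_of_nonneg fun _ _ => sq_nonneg _).mp hnorm.symm S hS))

lemma isDegreeLE_iff (D : ℕ) (f : EdgeFun n → ℝ) :
    IsDegreeLE n p D f ↔ ∃ c : Finset (Edge n) → ℝ,
      f = fun X => ∑ S ∈ univ.filter (fun S : Finset (Edge n) => S.card ≤ D),
        c S * chi n p S X := by
  have hgen : {g : EdgeFun n → ℝ | ∃ S : Finset (Edge n), S.card ≤ D ∧ g = chi n p S} =
      chi n p '' ↑(univ.filter fun S : Finset (Edge n) => S.card ≤ D) := by
    ext g
    simp [eq_comm]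
  rw [IsDegreeLE, hgen, Submodule.mem_span_image_finset_iff_exists_fun']
  refine exists_congr fun c => ⟨fun h => ?_, fun h => ?_⟩ <;> subst h <;> ext X <;> simp

lemma expP_sum_mul [Fintype V] (H : SimpleGraph V) {ι : Type*} (s : Finset ι)
    (c : ι → ℝ) (g : ι → EdgeFun n → ℝ) :
    expP n p H (fun X => ∑ i ∈ s, c i * g i X) = ∑ i ∈ s, c i * expP n p H (g i) := by
  have hinner : ∀ φ : V ↪ Fin n, ∑ X, nullWeight n p X * ∑ i ∈ s, c i * g i (plant n H φ X) =
      ∑ i ∈ s, c i * ∑ X, nullWeight n p X * g i (plant n H φ X) :=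
    fun φ => expQ_sum_mul s c fun i X => g i (plant n H φ X)
  simp only [expP, hinner]
  rw [sum_comm, mul_sum]
  refine sum_congr rfl fun i _ => ?_
  rw [← mul_sum]
  ring

lemma advOf_sum_chi [Fintype V] (hp : p ∈ Set.Ioo (0 : ℝ) 1) (H : SimpleGraph V)
    (s : Finset (Finset (Edge n))) (c : Finset (Edge n) → ℝ) :
    advOf n p H (fun X => ∑ S ∈ s, c S * chi n p S X) =
      (∑ S ∈ s, c S * expP n p H (chi n p S)) / √(∑ S ∈ s, c S ^ 2) := by
  rw [advOf, expP_sum_mul, expQ_sq_sum_chi hp]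

lemma expP_chi_empty [Fintype V] (H : SimpleGraph V) (hcard : Fintype.card V ≤ n) :
    expP n p H (chi n p ∅) = 1 := by
  have htotal : ∑ X : EdgeFun n, nullWeight n p X = 1 := by
    simpa [expQ] using expQ_prod (n := n) (p := p) ∅ fun _ _ => 1
  have hemb : (n.descFactorial (Fintype.card V) : ℝ) ≠ 0 := by
    simpa [Nat.descFactorial_eq_zero_iff_lt] using hcard
  simp [expP, chi, htotal, hemb]

lemma adv_eq_sqrt [Fintype V] (hp : p ∈ Set.Ioo (0 : ℝ) 1) (D : ℕ)
    (H : SimpleGraph V) (hcard : Fintype.card V ≤ n) :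
    Adv n p D H = √(∑ S ∈ univ.filter (fun S : Finset (Edge n) => S.card ≤ D),
      expP n p H (chi n p S) ^ 2) := by
  set s := univ.filter fun S : Finset (Edge n) => S.card ≤ D
  have hset : {r | ∃ f, IsDegreeLE n p D f ∧ f ≠ 0 ∧ r = advOf n p H f} =
      {r | ∃ c : Finset (Edge n) → ℝ, (∃ S ∈ s, c S ≠ 0) ∧
        r = (∑ S ∈ s, c S * expP n p H (chi n p S)) / √(∑ S ∈ s, c S ^ 2)} := by
    ext r
    simp only [Set.mem_ofPred_eq, isDegreeLE_iff]
    constructor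
    · rintro ⟨f, ⟨c, rfl⟩, hf, rfl⟩
      exact ⟨c, (sum_chi_ne_zero_iff hp s c).mp hf, advOf_sum_chi hp H s c⟩
    · rintro ⟨c, hc, rfl⟩
      exact ⟨_, ⟨c, rfl⟩, (sum_chi_ne_zero_iff hp s c).mpr hc, (advOf_sum_chi hp H s c).symm⟩
  have hempty : ∃ S ∈ s, expP n p H (chi n p S) ≠ 0 :=
    ⟨∅, by simp [s], by rw [expP_chi_empty H hcard]; exact one_ne_zero⟩
  rw [Adv, hset]
  exact (isGreatest_sum_mul_div_sqrt s _ hempty).csSup_eq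

def AllPlanted (H : SimpleGraph V) (φ : V ↪ Fin n) (S : Finset (Edge n)) : Prop :=
  ∀ e ∈ S, (e : Sym2 (Fin n)) ∈ (H.map φ).edgeSet

open Classical in
lemma expQ_chi_plant (H : SimpleGraph V) (φ : V ↪ Fin n) (S : Finset (Edge n)) :
    expQ n p (fun X => chi n p S (plant n H φ X)) =
      if AllPlanted H φ S then chiFactor p true ^ S.card else 0 := by
  set planted : Edge n → Prop := fun e => ∃ u v, H.Adj u v ∧ (e : Sym2 (Fin n)) = s(φ u, φ v)
  have hchi : ∀ X : EdgeFun n, chi n p S (plant n H φ X) =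
      ∏ e ∈ S, if planted e then chiFactor p true else chiFactor p (X e) := fun X =>
    prod_congr rfl fun e _ => by by_cases h : planted e <;> simp [plant, planted, h, chiFactor]
  have hmean : ∀ e ∈ S, p * (if planted e then chiFactor p true else chiFactor p true) +
      (1 - p) * (if planted e then chiFactor p true else chiFactor p false) =
        if planted e then chiFactor p true else 0 := fun e _ => by
    by_cases h : planted e
    · simp only [h, if_true]; ring
    · simpa only [h, if_false] using chiFactor_mean p
  simp only [hchi]
  rw [expQ_prod S fun e b => if planted e then chiFactor p true else chiFactor p b,
    prod_congr rfl hmean, prod_ite_zero, prod_const]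
  simp only [planted, ← SimpleGraph.mem_edgeSet_map_iff]
  exact if_congr Iff.rfl rfl rfl

lemma expP_chi [Fintype V] (H : SimpleGraph V) (S : Finset (Edge n)) :
    expP n p H (chi n p S) =
      Nat.card {φ : V ↪ Fin n // AllPlanted H φ S} / Nat.card (V ↪ Fin n) *
        chiFactor p true ^ S.card := by
  classical
  change (Fintype.card (V ↪ Fin n) : ℝ)⁻¹ *
    ∑ φ : V ↪ Fin n, expQ n p (fun X => chi n p S (plant n H φ X)) = _
  simp only [expQ_chi_plant, sum_ite, sum_const_zero, add_zero, sum_const, nsmul_eq_mul,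
    Nat.card_eq_fintype_card, Fintype.card_subtype]
  ring

abbrev Copies (n : ℕ) (S : Finset (Edge n)) (H : SimpleGraph V) :=
  {γ : {v : Fin n // v ∈ edgeVerts n S} ↪ V // ∀ u v, (finsetGraph n S).Adj u v → H.Adj (γ u) (γ v)}

lemma mem_edgeVerts {S : Finset (Edge n)} {a : Fin n} :
    a ∈ edgeVerts n S ↔ ∃ e ∈ S, a ∈ (e : Sym2 (Fin n)) := by
  simp [edgeVerts]

lemma mem_range_of_allPlanted {H : SimpleGraph V} {φ : V ↪ Fin n} {S : Finset (Edge n)}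
    (h : AllPlanted H φ S) (w : {v : Fin n // v ∈ edgeVerts n S}) : (w : Fin n) ∈ Set.range φ := by
  obtain ⟨e, he, hw⟩ := mem_edgeVerts.mp w.2
  have he' := h e he
  rw [SimpleGraph.edgeSet_map] at he'
  obtain ⟨z, -, hz⟩ := he'
  rw [← hz, Function.Embedding.sym2Map_apply] at hw
  obtain ⟨a, -, ha⟩ := Sym2.mem_map.mp hw
  exact ⟨a, ha⟩

lemma isCopy_iff_allPlanted {H : SimpleGraph V} {S : Finset (Edge n)}
    {γ : {v : Fin n // v ∈ edgeVerts n S} ↪ V} {φ : V ↪ Fin n}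
    (h : γ.trans φ = Function.Embedding.subtype _) :
    (∀ u v, (finsetGraph n S).Adj u v → H.Adj (γ u) (γ v)) ↔ AllPlanted H φ S := by
  have hadj : ∀ u v, H.Adj (γ u) (γ v) ↔ (H.map φ).Adj u v := fun u v => by
    rw [← SimpleGraph.map_adj_apply (f := φ)]
    simp only [← Function.Embedding.trans_apply, h, Function.Embedding.subtype_apply]
  constructor
  · rintro hcopy ⟨z, hz⟩ he
    induction z using Sym2.ind with
    | h a b =>
      have ha : a ∈ edgeVerts n S := mem_edgeVerts.mpr ⟨_, he, Sym2.mem_mk_left a b⟩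
      have hb : b ∈ edgeVerts n S := mem_edgeVerts.mpr ⟨_, he, Sym2.mem_mk_right a b⟩
      exact (hadj ⟨a, ha⟩ ⟨b, hb⟩).mp (hcopy _ _ ⟨_, he, rfl⟩)
  · rintro hall u v ⟨e, he, huv⟩
    rw [hadj, ← SimpleGraph.mem_edgeSet, ← huv]
    exact hall e he

noncomputable def copyOfAllPlanted {H : SimpleGraph V} {φ : V ↪ Fin n} {S : Finset (Edge n)}
    (h : AllPlanted H φ S) : {v : Fin n // v ∈ edgeVerts n S} ↪ V where
  toFun w := Set.rangeSplitting φ ⟨w, mem_range_of_allPlanted h w⟩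
  inj' _ _ huv := Subtype.ext (Subtype.mk.inj (Set.rangeSplitting_injective φ huv))

lemma copyOfAllPlanted_trans {H : SimpleGraph V} {φ : V ↪ Fin n} {S : Finset (Edge n)}
    (h : AllPlanted H φ S) : (copyOfAllPlanted h).trans φ = Function.Embedding.subtype _ :=
  Function.Embedding.ext fun _ => Set.apply_rangeSplitting φ _

noncomputable def allPlantedEquiv (H : SimpleGraph V) (S : Finset (Edge n)) :
    {φ : V ↪ Fin n // AllPlanted H φ S} ≃
      Σ γ : Copies n S H, {φ : V ↪ Fin n // γ.1.trans φ = Function.Embedding.subtype _} where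
  toFun φ := ⟨⟨copyOfAllPlanted φ.2, (isCopy_iff_allPlanted (copyOfAllPlanted_trans φ.2)).mpr φ.2⟩,
    φ.1, copyOfAllPlanted_trans φ.2⟩
  invFun x := ⟨x.2.1, (isCopy_iff_allPlanted x.2.2).mp x.1.2⟩
  left_inv _ := rfl
  right_inv x := by
    refine Sigma.subtype_ext (Subtype.ext (Function.Embedding.ext fun w => x.2.1.injective ?_)) rfl
    rw [← Function.Embedding.trans_apply, ← Function.Embedding.trans_apply,
      copyOfAllPlanted_trans, x.2.2]

lemma card_allPlanted_mul [Fintype V] (H : SimpleGraph V) (S : Finset (Edge n)) :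
    Nat.card {φ : V ↪ Fin n // AllPlanted H φ S} * n.descFactorial (edgeVerts n S).card =
      finCopyCount n S H * n.descFactorial (Fintype.card V) := by
  classical
  have hW : Nat.card ({v : Fin n // v ∈ edgeVerts n S} ↪ Fin n) =
      n.descFactorial (edgeVerts n S).card := by
    simp [Nat.card_eq_fintype_card, Fintype.card_embedding_eq]
  have hV : Nat.card (V ↪ Fin n) = n.descFactorial (Fintype.card V) := by
    simp [Nat.card_eq_fintype_card, Fintype.card_embedding_eq]
  rw [← hW, ← hV, Nat.card_congr (allPlantedEquiv H S), Nat.card_sigma, sum_mul,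
    sum_congr rfl fun γ _ => γ.1.card_fiber_trans_mul_card _, sum_const, card_univ, smul_eq_mul,
    finCopyCount, copyCount, Nat.card_eq_fintype_card (α := Copies n S H)]

lemma expP_chi_eq [Fintype V] (H : SimpleGraph V) (hcard : Fintype.card V ≤ n)
    (S : Finset (Edge n)) :
    expP n p H (chi n p S) =
      finCopyCount n S H / n.descFactorial (edgeVerts n S).card * chiFactor p true ^ S.card := by
  have hV : (Nat.card (V ↪ Fin n) : ℝ) ≠ 0 := by
    simpa [Nat.card_eq_fintype_card, Fintype.card_embedding_eq, Nat.descFactorial_eq_zero_iff_lt]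
      using hcard
  have hW : (n.descFactorial (edgeVerts n S).card : ℝ) ≠ 0 := by
    simpa [Nat.descFactorial_eq_zero_iff_lt] using card_le_univ (edgeVerts n S)
  rw [expP_chi]
  congr 1
  rw [div_eq_div_iff hV hW, Nat.card_eq_fintype_card (α := V ↪ Fin n),
    Fintype.card_embedding_eq, Fintype.card_fin]
  exact_mod_cast card_allPlanted_mul H S

end Planted

open Planted in
/-- the formula for the squared degree-D advantage. -/
theorem adv_squared_formula
    {V : Type} [Fintype V] (n : ℕ) (p : ℝ) (hp : p ∈ Set.Ioo (0 : ℝ) 1) (D : ℕ)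
    (H : SimpleGraph V) (hcard : Fintype.card V ≤ n) :
    (Adv n p D H) ^ 2 =
      ∑ S ∈ Finset.univ.filter (fun S : Finset (Edge n) => S.card ≤ D),
        ((finCopyCount n S H : ℝ) / (n.descFactorial (edgeVerts n S).card : ℝ)) ^ 2 *
          ((1 - p) / p) ^ S.card := by
  rw [adv_eq_sqrt hp D H hcard, Real.sq_sqrt (Finset.sum_nonneg fun _ _ => sq_nonneg _)]
  refine Finset.sum_congr rfl fun S _ => ?_
  rw [expP_chi_eq H hcard, mul_pow, ← pow_mul, mul_comm S.card 2, pow_mul, sq_chiFactor_true hp]
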